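/- In the setting of the Lyapunov-damped system (LD) with f convex attaining its minimum and bounded solution x: for every δ > 0, lim_{t→∞} t^{2-δ} (f(x(t)) - f*) = 0, i.e., f(x(t)) - f* = o(1/t^{2-δ}). -/

import Mathlib

/-!
Along a solution the energy decreases, `E' = -√E ‖ẋ‖²`. With `z` a minimizer, the function
`L = ⟪x - z, ẋ⟫ + √E (‖x - z‖² / 2 + 3)` satisfies `L' ≤ -E` by convexity of `f`, and
`|L| = O(√E)` because `x` is bounded. Integrating `L' ≤ -E` over `[T/2, T]` and using that `E`
decreases gives `T E(T) = O(√E(T/2))`, so a rate `E = O(t^(-a))` improves to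
`E = O(t^(-(1 + a/2)))`. Starting from `a = 0`, the exponents `2 - 2^(1-n)` tend to `2`; hence
`E = O(t^(-a))` for every `a < 2`, and `f(x) - f* ≤ E`.
-/

open Set Filter Asymptotics Topology
open scoped RealInnerProductSpace

theorem ConvexOn.sub_le_inner_of_hasGradientAt {H : Type*} [NormedAddCommGroup H]
    [InnerProductSpace ℝ H] [CompleteSpace H] {f : H → ℝ} {g u : H}
    (hconv : ConvexOn ℝ univ f) (hf : HasGradientAt f g u) (z : H) :
    f u - f z ≤ ⟪g, u - z⟫ := by
  set ℓ : ℝ →ᵃ[ℝ] H := AffineMap.lineMap u z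
  have hℓ : HasDerivAt ℓ (z - u) 0 := by
    have hℓ_eq : (ℓ : ℝ → H) = fun s => s • (z - u) + u := by
      ext s; simp [ℓ, AffineMap.lineMap_apply]
    simpa [hℓ_eq] using ((hasDerivAt_id (0 : ℝ)).smul_const (z - u)).add_const u
  have hderiv : HasDerivAt (f ∘ ℓ) ⟪g, z - u⟫ 0 :=
    hf.hasFDerivAt.comp_hasDerivAt_of_eq 0 hℓ (by simp [ℓ])
  have hslope := (hconv.comp_affineMap ℓ).le_slope_of_hasDerivAt (mem_univ 0) (mem_univ 1)
    zero_lt_one hderiv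
  have hinner : ⟪g, z - u⟫ = -⟪g, u - z⟫ := by rw [← inner_neg_right, neg_sub]
  simp only [slope, Function.comp_apply, ℓ, AffineMap.lineMap_apply_zero,
    AffineMap.lineMap_apply_one, sub_zero, inv_one, one_smul, vsub_eq_sub] at hslope
  linarith

theorem sub_mul_le_sub_of_deriv_le_neg {E L : ℝ → ℝ} {a b : ℝ} (hab : a ≤ b)
    (hE : AntitoneOn E (Icc a b)) (hL : ∀ t ∈ Icc a b, DifferentiableAt ℝ L t)
    (hL' : ∀ t ∈ Icc a b, deriv L t ≤ -E t) :
    (b - a) * E b ≤ L a - L b := by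
  have hG : ∀ t ∈ Icc a b, HasDerivAt (fun s => L s + s * E b) (deriv L t + E b) t :=
    fun t ht => (hL t ht).hasDerivAt.add (hasDerivAt_mul_const (E b))
  have hanti : AntitoneOn (fun s => L s + s * E b) (Icc a b) := by
    refine antitoneOn_of_hasDerivWithinAt_nonpos (convex_Icc a b)
      (fun t ht => (hG t ht).continuousAt.continuousWithinAt)
      (fun t ht => (hG t (interior_subset ht)).hasDerivWithinAt) fun t ht => ?_
    have ht' := interior_subset ht
    linarith [hL' t ht', hE ht' (right_mem_Icc.2 hab) ht'.2]
  have := hanti (left_mem_Icc.2 hab) (right_mem_Icc.2 hab) hab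
  simp only at this
  linarith

theorem isBigO_rpow_neg_of_mul_isBigO_sqrt_half {E : ℝ → ℝ} {a : ℝ}
    (hkey : (fun t => t * E t) =O[atTop] fun t => √(E (t / 2)))
    (hE : E =O[atTop] fun t => t ^ (-a)) :
    E =O[atTop] fun t => t ^ (-(1 + a / 2)) := by
  have hhalf : (fun t => E (t / 2)) =O[atTop] fun t => t ^ (-a) := by
    refine (hE.comp_tendsto (tendsto_id.atTop_div_const two_pos)).trans ?_
    refine IsBigO.of_bound (2 ^ a) ?_
    filter_upwards [eventually_ge_atTop 0] with t ht
    rw [Function.comp_apply, id, Real.div_rpow ht zero_le_two, Real.rpow_neg zero_le_two,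
      div_inv_eq_mul, mul_comm, norm_mul, Real.norm_of_nonneg (by positivity : (0 : ℝ) ≤ 2 ^ a)]
  have hsqrt : (fun t => √(E (t / 2))) =O[atTop] fun t => t ^ (-(a / 2)) := by
    refine (hhalf.sqrt ?_).congr' EventuallyEq.rfl ?_
    · filter_upwards [eventually_ge_atTop 0] with t ht using by positivity
    · filter_upwards [eventually_ge_atTop 0] with t ht
      rw [Real.sqrt_eq_rpow, ← Real.rpow_mul ht]
      ring_nf
  refine ((isBigO_refl (fun t : ℝ => t⁻¹) atTop).mul (hkey.trans hsqrt)).congr' ?_ ?_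
  · filter_upwards [eventually_gt_atTop 0] with t ht
    field_simp
  · filter_upwards [eventually_gt_atTop 0] with t ht
    rw [← Real.rpow_neg_one, ← Real.rpow_add ht]
    ring_nf

theorem isBigO_rpow_neg_of_lt_two {E : ℝ → ℝ}
    (hkey : (fun t => t * E t) =O[atTop] fun t => √(E (t / 2)))
    (hbdd : E =O[atTop] fun _ => (1 : ℝ)) {a : ℝ} (ha : a < 2) :
    E =O[atTop] fun t => t ^ (-a) := by
  have hiter : ∀ n : ℕ, E =O[atTop] fun t => t ^ (-(2 - 2 * (1 / 2 : ℝ) ^ n)) := by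
    intro n
    induction n with
    | zero => simpa using hbdd
    | succ n ih =>
      convert isBigO_rpow_neg_of_mul_isBigO_sqrt_half hkey ih using 3
      ring
  obtain ⟨n, hn⟩ := exists_pow_lt_of_lt_one (by linarith : 0 < (2 - a) / 2)
    (by norm_num : (1 / 2 : ℝ) < 1)
  refine (hiter n).trans (IsBigO.of_bound' ?_)
  filter_upwards [eventually_ge_atTop 1] with t ht
  rw [Real.norm_of_nonneg (by positivity), Real.norm_of_nonneg (by positivity)]
  exact Real.rpow_le_rpow_of_exponent_le ht (by linarith)

theorem tendsto_rpow_mul_of_isBigO_rpow_neg {g : ℝ → ℝ} {a b : ℝ}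
    (hg : g =O[atTop] fun t => t ^ (-a)) (hba : b < a) :
    Tendsto (fun t => t ^ b * g t) atTop (𝓝 0) := by
  refine ((isBigO_refl (fun t : ℝ => t ^ b) atTop).mul hg).trans_tendsto ?_
  refine (tendsto_rpow_neg_atTop (sub_pos.2 hba)).congr' ?_
  filter_upwards [eventually_gt_atTop 0] with t ht
  rw [← Real.rpow_add ht]
  ring_nf

theorem antitoneOn_Ici_of_hasDerivAt_nonpos {g g' : ℝ → ℝ} {t₀ : ℝ}
    (hg : ∀ t ≥ t₀, HasDerivAt g (g' t) t) (hg' : ∀ t ≥ t₀, g' t ≤ 0) :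
    AntitoneOn g (Ici t₀) :=
  antitoneOn_of_hasDerivWithinAt_nonpos (convex_Ici t₀)
    (fun t ht => (hg t ht).continuousAt.continuousWithinAt)
    (fun t ht => (hg t (interior_subset ht)).hasDerivWithinAt)
    fun t ht => hg' t (interior_subset ht)

theorem isBigO_mul_sqrt_half_of_deriv_le_neg {E L : ℝ → ℝ} {t₀ c : ℝ}
    (hE0 : ∀ t ≥ t₀, 0 ≤ E t) (hE : AntitoneOn E (Ici t₀))
    (hL : ∀ t ≥ t₀, 0 < E t → DifferentiableAt ℝ L t ∧ deriv L t ≤ -E t)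
    (hLE : ∀ t ≥ t₀, |L t| ≤ c * √(E t)) :
    (fun t => t * E t) =O[atTop] fun t => √(E (t / 2)) := by
  refine IsBigO.of_bound (4 * c) ?_
  filter_upwards [eventually_ge_atTop (2 * t₀), eventually_ge_atTop 0] with T hT₀ hT0
  have hhalf : t₀ ≤ T / 2 := by linarith
  have hle : T / 2 ≤ T := by linarith
  have hT : t₀ ≤ T := hhalf.trans hle
  rw [Real.norm_of_nonneg (mul_nonneg hT0 (hE0 T hT)), Real.norm_of_nonneg (Real.sqrt_nonneg _)]
  rcases (hE0 T hT).eq_or_lt with hzero | hpos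
  · rw [← hzero, mul_zero, mul_assoc]
    linarith [abs_nonneg (L (T / 2)), hLE (T / 2) hhalf]
  have hIcc : Icc (T / 2) T ⊆ Ici t₀ := fun t ht => le_trans hhalf ht.1
  have hEpos : ∀ t ∈ Icc (T / 2) T, 0 < E t := fun t ht =>
    hpos.trans_le (hE (hIcc ht) hT ht.2)
  have hdecay := sub_mul_le_sub_of_deriv_le_neg hle (hE.mono hIcc)
    (fun t ht => (hL t (hIcc ht) (hEpos t ht)).1) (fun t ht => (hL t (hIcc ht) (hEpos t ht)).2)
  have hsqrt_pos : 0 < √(E T) := Real.sqrt_pos.2 hpos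
  have hc : 0 ≤ c :=
    nonneg_of_mul_nonneg_left ((abs_nonneg (L T)).trans (hLE T hT)) hsqrt_pos
  have hsqrt_le : √(E T) ≤ √(E (T / 2)) := Real.sqrt_le_sqrt (hE hhalf hT hle)
  calc T * E T = 2 * ((T - T / 2) * E T) := by ring
    _ ≤ 2 * (|L (T / 2)| + |L T|) := by linarith [le_abs_self (L (T / 2)), neg_abs_le (L T)]
    _ ≤ 2 * (c * √(E (T / 2)) + c * √(E (T / 2))) := by
        gcongr
        · exact hLE _ hhalf
        · exact (hLE T hT).trans (mul_le_mul_of_nonneg_left hsqrt_le hc)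
    _ = 4 * c * √(E (T / 2)) := by ring

section LyapunovDamped

variable {H : Type*} [NormedAddCommGroup H] [InnerProductSpace ℝ H]
  {f : H → ℝ} {f' : H → H} {x x' x'' : ℝ → H} {E : ℝ → ℝ} {z : H} {t : ℝ}

theorem hasDerivAt_energy [CompleteSpace H] {fstar : ℝ} (hf : HasGradientAt f (f' (x t)) (x t))
    (hx : HasDerivAt x (x' t) t) (hx' : HasDerivAt x' (x'' t) t)
    (hE : ∀ t, E t = f (x t) - fstar + ‖x' t‖ ^ 2 / 2)
    (hODE : x'' t + √(E t) • x' t + f' (x t) = 0) :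
    HasDerivAt E (-(√(E t) * ‖x' t‖ ^ 2)) t := by
  have hx'' : x'' t = -(√(E t) • x' t) - f' (x t) := by
    rw [← sub_eq_zero, ← hODE]; abel
  have hd : HasDerivAt (fun s => f (x s) - fstar + ‖x' s‖ ^ 2 / 2)
      (⟪f' (x t), x' t⟫ + 2 * ⟪x' t, x'' t⟫ / 2) t :=
    ((hf.hasFDerivAt.comp_hasDerivAt t hx).sub_const fstar).add (hx'.norm_sq.div_const 2)
  rw [← funext hE] at hd
  refine hd.congr_deriv ?_
  rw [hx'', inner_sub_right, inner_neg_right, real_inner_smul_right,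
    real_inner_self_eq_norm_sq, real_inner_comm]
  ring

noncomputable def lyapunov (x x' : ℝ → H) (E : ℝ → ℝ) (z : H) (t : ℝ) : ℝ :=
  ⟪x t - z, x' t⟫ + √(E t) * (‖x t - z‖ ^ 2 / 2 + 3)

theorem lyapunov_deriv_le [CompleteSpace H] (hconv : ConvexOn ℝ univ f)
    (hf : HasGradientAt f (f' (x t)) (x t))
    (hx : HasDerivAt x (x' t) t) (hx' : HasDerivAt x' (x'' t) t)
    (hE : E t = f (x t) - f z + ‖x' t‖ ^ 2 / 2)
    (hdE : HasDerivAt E (-(√(E t) * ‖x' t‖ ^ 2)) t)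
    (hODE : x'' t + √(E t) • x' t + f' (x t) = 0) (hpos : 0 < E t) :
    DifferentiableAt ℝ (lyapunov x x' E z) t ∧ deriv (lyapunov x x' E z) t ≤ -E t := by
  have hsqrt : HasDerivAt (fun s => √(E s)) (-(‖x' t‖ ^ 2 / 2)) t := by
    convert hdE.sqrt hpos.ne' using 1
    field_simp
  have hL : HasDerivAt (lyapunov x x' E z) _ t :=
    ((hx.sub_const z).inner ℝ hx').add
      (hsqrt.mul (((hx.sub_const z).norm_sq.div_const 2).add_const 3))
  refine ⟨hL.differentiableAt, hL.deriv ▸ ?_⟩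
  have hx'' : x'' t = -(√(E t) • x' t) - f' (x t) := by
    rw [← sub_eq_zero, ← hODE]; abel
  have hcvx := hconv.sub_le_inner_of_hasGradientAt hf z
  rw [real_inner_comm] at hcvx
  rw [hx'', inner_sub_right, inner_neg_right, real_inner_smul_right, real_inner_self_eq_norm_sq, hE]
  nlinarith [mul_nonneg (sq_nonneg ‖x' t‖) (sq_nonneg ‖x t - z‖)]

theorem abs_lyapunov_le {R : ℝ} (hkin : ‖x' t‖ ^ 2 / 2 ≤ E t) (hR : ‖x t - z‖ ≤ R) :
    |lyapunov x x' E z t| ≤ (2 * R + R ^ 2 / 2 + 3) * √(E t) := by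
  have hE0 : 0 ≤ E t := (div_nonneg (sq_nonneg _) zero_le_two).trans hkin
  have hsq := Real.sq_sqrt hE0
  have hsqrt0 := Real.sqrt_nonneg (E t)
  have hv : ‖x' t‖ ≤ 2 * √(E t) := by nlinarith [norm_nonneg (x' t)]
  have hinner : |⟪x t - z, x' t⟫| ≤ R * (2 * √(E t)) := (abs_real_inner_le_norm _ _).trans
    (mul_le_mul hR hv (norm_nonneg _) ((norm_nonneg _).trans hR))
  have hdist : ‖x t - z‖ ^ 2 ≤ R ^ 2 := pow_le_pow_left₀ (norm_nonneg _) hR 2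
  unfold lyapunov
  rw [abs_le] at hinner ⊢
  constructor <;> nlinarith [mul_nonneg hsqrt0 (sq_nonneg ‖x t - z‖)]

end LyapunovDamped

theorem stmt_9 {H : Type*} [NormedAddCommGroup H] [InnerProductSpace ℝ H] [CompleteSpace H]
    (f : H → ℝ) (f' : H → H)
    (hf : ∀ y, HasGradientAt f (f' y) y)
    (hconv : ConvexOn ℝ univ f)
    (z : H) (hz : ∀ y, f z ≤ f y)
    (fstar : ℝ) (hfstar : fstar = f z)
    (t₀ : ℝ) (x x' x'' : ℝ → H)
    (hx : ∀ t, HasDerivAt x (x' t) t)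
    (hx' : ∀ t, HasDerivAt x' (x'' t) t)
    (E : ℝ → ℝ) (hE : ∀ t, E t = f (x t) - fstar + ‖x' t‖ ^ 2 / 2)
    (hODE : ∀ t ≥ t₀, x'' t + Real.sqrt (E t) • x' t + f' (x t) = 0)
    (hbdd : ∃ M : ℝ, ∀ t ≥ t₀, ‖x t‖ ≤ M) :
    ∀ δ > (0 : ℝ),
      Tendsto (fun t => t ^ (2 - δ) * (f (x t) - fstar)) atTop (nhds 0) := by
  intro δ hδ
  subst hfstar
  obtain ⟨M, hM⟩ := hbdd
  have hgap : ∀ t, 0 ≤ f (x t) - f z := fun t => sub_nonneg.2 (hz (x t))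
  have hkin : ∀ t, ‖x' t‖ ^ 2 / 2 ≤ E t := fun t => by linarith [hE t, hgap t]
  have hE0 : ∀ t, 0 ≤ E t := fun t => (div_nonneg (sq_nonneg _) zero_le_two).trans (hkin t)
  have hdE : ∀ t ≥ t₀, HasDerivAt E (-(√(E t) * ‖x' t‖ ^ 2)) t := fun t ht =>
    hasDerivAt_energy (hf (x t)) (hx t) (hx' t) hE (hODE t ht)
  have hanti : AntitoneOn E (Ici t₀) := antitoneOn_Ici_of_hasDerivAt_nonpos hdE fun t _ =>
    neg_nonpos.2 (by positivity)
  have hkey : (fun t => t * E t) =O[atTop] fun t => √(E (t / 2)) :=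
    isBigO_mul_sqrt_half_of_deriv_le_neg (fun t _ => hE0 t) hanti
      (fun t ht hpos => lyapunov_deriv_le hconv (hf (x t)) (hx t) (hx' t) (hE t) (hdE t ht)
        (hODE t ht) hpos)
      (fun t ht => abs_lyapunov_le (hkin t)
        ((norm_sub_le _ _).trans (add_le_add_left (hM t ht) _)))
  have hbddE : E =O[atTop] fun _ => (1 : ℝ) := by
    refine IsBigO.of_bound (E t₀) ?_
    filter_upwards [eventually_ge_atTop t₀] with t ht
    rw [Real.norm_of_nonneg (hE0 t), norm_one, mul_one]
    exact hanti self_mem_Ici ht ht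
  have hgapE : (fun t => f (x t) - f z) =O[atTop] E := IsBigO.of_bound' <| .of_forall fun t => by
    rw [Real.norm_of_nonneg (hgap t), Real.norm_of_nonneg (hE0 t), hE t]
    linarith [sq_nonneg ‖x' t‖]
  exact tendsto_rpow_mul_of_isBigO_rpow_neg
    (hgapE.trans (isBigO_rpow_neg_of_lt_two hkey hbddE (a := 2 - δ / 2) (by linarith)))
    (by linarith)
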